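/- arXiv:2506.16239 — 3 statements merged into one kernel-verified Lean document; each statement's English description precedes it below -/
import Mathlib

section
/- (Quaternionic Taylor-coefficient formula.) Let I ∈ ℍ be an imaginary unit, p₀ ∈ ℍ, R > 0 (possibly R = ∞), and let (a_n)_{n≥0} be quaternions lying in the slice ℂ_I such that for every s with 0 < s < R the series Σ_{n≥0} ‖a_n‖·sⁿ converges. Define f(p) = Σ_{n=0}^∞ a_n·(p − p₀)ⁿ for ‖p − p₀‖ < R. Then for every r with 0 < r < R, with γ(t) = p₀ + r·exp(t·I) on [0, 2π], and every n ≥ 0: ∫_0^{2π} (γ(t) − p₀)^{−(n+1)} * f(γ(t)) * γ'(t) dt = 2π·I·a_n. (Equivalently, a_n = (2π·I)⁻¹ · ∫_{C_r} (p − p₀)^{−(n+1)} f(p) dp.) -/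
/-!
The slice `ℂ_I` is the image of the isometric `ℝ`-algebra embedding `φ = Complex.liftAux I hI`
of `ℂ` into `ℍ`. It sends `circleMap 0 r` to `γ - p₀`, its derivative to `γ'`, complex
coefficients `α n` to `a n`, and hence the sum of `∑ α n zⁿ` at `z = circleMap 0 r t` to `f (γ t)`.
Being `ℝ`-linear and isometric, `φ` commutes with the integral, so the identity is the image
under `φ` of the complex Cauchy formula for Taylor coefficients, which holds because a convergent
power series coincides with the Cauchy power series of its sum.
-/

open scoped Quaternion

namespace FormalMultilinearSeries

open Real in
theorem circleIntegral_inv_pow_smul_sum {E : Type*} [NormedAddCommGroup E] [NormedSpace ℂ E]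
    [CompleteSpace E] (p : FormalMultilinearSeries ℂ ℂ E) {r : ℝ} (hr : 0 < r)
    (hrp : ENNReal.ofReal r < p.radius) (n : ℕ) :
    ∮ z in C(0, r), z⁻¹ ^ n • z⁻¹ • p.sum z = (2 * π * Complex.I) • p.coeff n := by
  -- naming the sum keeps the rewrite of `p` below away from the integrand
  set g := p.sum
  have hsum : HasFPowerSeriesOnBall g p 0 p.radius := p.hasFPowerSeriesOnBall (pos_of_gt hrp)
  have hball : Metric.closedBall (0 : ℂ) r ⊆ Metric.eball 0 p.radius := fun z hz =>
    Metric.mem_eball.2 <| (edist_dist z 0 ▸ ENNReal.ofReal_le_ofReal hz).trans_lt hrp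
  have hcauchy := (hsum.differentiableOn.mono hball).hasFPowerSeriesOnBall (R := ⟨r, hr.le⟩) hr
  rw [coeff, hsum.hasFPowerSeriesAt.eq_formalMultilinearSeries hcauchy.hasFPowerSeriesAt]
  simp only [cauchyPowerSeries, ContinuousMultilinearMap.mkPiRing_apply, Pi.one_apply,
    Finset.prod_const_one, sub_zero, smul_smul, one_mul, mul_inv_cancel₀ Complex.two_pi_I_ne_zero,
    one_smul]
  rfl

theorem le_radius_ofScalars {𝕜 E : Type*} [NontriviallyNormedField 𝕜] [NormedRing E]
    [NormedAlgebra 𝕜 E] [NormOneClass E] (α : ℕ → 𝕜) {R : ENNReal}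
    (h : ∀ s : ℝ, 0 < s → ENNReal.ofReal s < R → Summable fun n => ‖α n‖ * s ^ n) :
    R ≤ (ofScalars E α).radius := by
  refine ENNReal.le_of_forall_pos_nnreal_lt fun s hs hsR => le_radius_of_summable _ ?_
  simpa [ofScalars_norm] using h s hs (by simpa using hsR)

end FormalMultilinearSeries

theorem AlgHom.hasSum_map_ofScalars_sum {A : Type*} [Ring A] [Algebra ℝ A] [TopologicalSpace A]
    (φ : ℂ →ₐ[ℝ] A) (hφ : Continuous φ) {α : ℕ → ℂ} {z : ℂ}
    (hz : z ∈ Metric.eball 0 (FormalMultilinearSeries.ofScalars ℂ α).radius) :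
    HasSum (fun m => φ (α m) * φ z ^ m) (φ ((FormalMultilinearSeries.ofScalars ℂ α).sum z)) := by
  convert ((FormalMultilinearSeries.ofScalars ℂ α).hasSum hz).map φ hφ using 2 with m
  rw [← map_pow, ← map_mul, mul_comm]
  simp

namespace Quaternion

theorem normSq_eq_one_of_mul_self_eq_neg_one {q : ℍ[ℝ]} (hq : q * q = -1) : normSq q = 1 := by
  have h := congrArg normSq hq
  rw [map_mul, normSq_neg, map_one, mul_self_eq_one_iff] at h
  exact h.resolve_right (by linarith [normSq_nonneg (a := q)])

theorem re_eq_zero_of_mul_self_eq_neg_one {q : ℍ[ℝ]} (hq : q * q = -1) : q.re = 0 := by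
  rw [← sq_eq_neg_normSq, normSq_eq_one_of_mul_self_eq_neg_one hq, sq, hq, coe_one]

theorem star_liftAux {I : ℍ[ℝ]} (hI : I * I = -1) (z : ℂ) :
    star (Complex.liftAux I hI z) = Complex.liftAux I hI (starRingEnd ℂ z) := by
  have hstar : star I = -I := star_eq_neg.2 (re_eq_zero_of_mul_self_eq_neg_one hI)
  simp [Complex.liftAux_apply, hstar]

theorem norm_liftAux {I : ℍ[ℝ]} (hI : I * I = -1) (z : ℂ) :
    ‖Complex.liftAux I hI z‖ = ‖z‖ := by
  have h : normSq (Complex.liftAux I hI z) = Complex.normSq z := by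
    rw [← coe_inj, ← self_mul_star, star_liftAux, ← map_mul, Complex.mul_conj]
    exact (Complex.liftAux I hI).commutes _
  rw [normSq_eq_norm_mul_self, Complex.normSq_eq_norm_sq, sq] at h
  exact (mul_self_inj (norm_nonneg _) (norm_nonneg _)).1 h

noncomputable def sliceIsometry {I : ℍ[ℝ]} (hI : I * I = -1) : ℂ →ₗᵢ[ℝ] ℍ[ℝ] where
  toLinearMap := (Complex.liftAux I hI).toLinearMap
  norm_map' := norm_liftAux hI

theorem liftAux_circleMap {I : ℍ[ℝ]} (hI : I * I = -1) (r t : ℝ) :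
    Complex.liftAux I hI (circleMap 0 r t) = r • NormedSpace.exp (t • I) := by
  rw [circleMap_zero, map_mul, Complex.exp_eq_exp_ℂ,
    NormedSpace.map_exp (Complex.liftAux I hI) (sliceIsometry hI).continuous, ← Complex.real_smul, map_smul,
    Complex.liftAux_apply_I, Algebra.smul_def r, ← (Complex.liftAux I hI).commutes r]
  rfl

end Quaternion

theorem quaternion_taylor_coefficient_formula_general
    (I : ℍ[ℝ]) (hI : I * I = -1) (p₀ : ℍ[ℝ]) (R : ENNReal)
    (a : ℕ → ℍ[ℝ]) (ha : ∀ n, ∃ x v : ℝ, a n = (x : ℍ[ℝ]) + v • I)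
    (hsum : ∀ s : ℝ, 0 < s → ENNReal.ofReal s < R →
      Summable (fun n : ℕ => ‖a n‖ * s ^ n))
    (f : ℍ[ℝ] → ℍ[ℝ])
    (hf : ∀ p : ℍ[ℝ], ENNReal.ofReal ‖p - p₀‖ < R →
      f p = ∑' n : ℕ, a n * (p - p₀) ^ n)
    (r : ℝ) (hr : 0 < r) (hrR : ENNReal.ofReal r < R)
    (γ γ' : ℝ → ℍ[ℝ])
    (hγ : ∀ t, γ t = p₀ + r • NormedSpace.exp (t • I))
    (hγ' : ∀ t, γ' t = r • (I * NormedSpace.exp (t • I)))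
    (n : ℕ) :
    ∫ t in (0:ℝ)..(2 * Real.pi), ((γ t - p₀)⁻¹) ^ (n + 1) * f (γ t) * γ' t
      = (2 * Real.pi) • (I * a n) := by
  set φ := Complex.liftAux I hI
  choose x v hxv using ha
  set P := FormalMultilinearSeries.ofScalars ℂ fun m => (⟨x m, v m⟩ : ℂ)
  have hφα : ∀ m, φ ⟨x m, v m⟩ = a m := fun m => by rw [hxv m]; rfl
  have hφnorm : ∀ z, ‖φ z‖ = ‖z‖ := Quaternion.norm_liftAux hI
  have hradius : R ≤ P.radius := FormalMultilinearSeries.le_radius_ofScalars _ fun s hs hsR => by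
    simpa only [← hφα, hφnorm] using hsum s hs hsR
  have hz : ∀ t, γ t - p₀ = φ (circleMap 0 r t) := fun t => by
    rw [hγ, add_sub_cancel_left, Quaternion.liftAux_circleMap]
  have hdz : ∀ t, γ' t = φ (deriv (circleMap 0 r) t) := fun t => by
    rw [hγ', deriv_circleMap, mul_comm, map_mul, Quaternion.liftAux_circleMap,
      Complex.liftAux_apply_I, mul_smul_comm]
  have hfz : ∀ t, f (γ t) = φ (P.sum (circleMap 0 r t)) := fun t => by
    have hnorm : ENNReal.ofReal ‖circleMap 0 r t‖ = ENNReal.ofReal r := by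
      rw [norm_circleMap_zero, abs_of_pos hr]
    rw [hf _ (by rwa [hz, hφnorm, hnorm]), hz]
    simp only [← hφα]
    refine (φ.hasSum_map_ofScalars_sum (Quaternion.sliceIsometry hI).continuous ?_).tsum_eq
    rw [Metric.mem_eball, edist_zero_right, ← ofReal_norm, hnorm]
    exact hrR.trans_le hradius
  calc ∫ t in (0:ℝ)..(2 * Real.pi), ((γ t - p₀)⁻¹) ^ (n + 1) * f (γ t) * γ' t
      = ∫ t in (0:ℝ)..(2 * Real.pi), φ (deriv (circleMap 0 r) t • (circleMap 0 r t)⁻¹ ^ n •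
          (circleMap 0 r t)⁻¹ • P.sum (circleMap 0 r t)) := by
        refine intervalIntegral.integral_congr fun t _ => ?_
        rw [hz, hfz, hdz, ← map_inv₀, ← map_pow, ← map_mul, ← map_mul]
        congr 1
        simp only [smul_eq_mul]
        ring
    _ = φ (∮ z in C(0, r), z⁻¹ ^ n • z⁻¹ • P.sum z) :=
        (Quaternion.sliceIsometry hI).intervalIntegral_comp_comm _
    _ = φ ((2 * Real.pi : ℝ) • (Complex.I * ⟨x n, v n⟩)) := by
        rw [P.circleIntegral_inv_pow_smul_sum hr (hrR.trans_le hradius),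
          FormalMultilinearSeries.coeff_ofScalars, Complex.real_smul, smul_eq_mul]
        congr 1
        push_cast
        ring
    _ = (2 * Real.pi) • (I * a n) := by
        rw [map_smul, map_mul, Complex.liftAux_apply_I, hφα]

theorem quaternion_taylor_coefficient_formula
    (I : ℍ[ℝ]) (hI : I * I = -1) (p₀ : ℍ[ℝ]) (R : ENNReal) (hR : 0 < R)
    (a : ℕ → ℍ[ℝ]) (ha : ∀ n, ∃ x v : ℝ, a n = (x : ℍ[ℝ]) + v • I)
    (hsum : ∀ s : ℝ, 0 < s → ENNReal.ofReal s < R →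
      Summable (fun n : ℕ => ‖a n‖ * s ^ n))
    (f : ℍ[ℝ] → ℍ[ℝ])
    (hf : ∀ p : ℍ[ℝ], ENNReal.ofReal ‖p - p₀‖ < R →
      f p = ∑' n : ℕ, a n * (p - p₀) ^ n)
    (r : ℝ) (hr : 0 < r) (hrR : ENNReal.ofReal r < R)
    (γ γ' : ℝ → ℍ[ℝ])
    (hγ : ∀ t, γ t = p₀ + r • NormedSpace.exp (t • I))
    (hγ' : ∀ t, γ' t = r • (I * NormedSpace.exp (t • I)))
    (n : ℕ) :
    ∫ t in (0:ℝ)..(2 * Real.pi), ((γ t - p₀)⁻¹) ^ (n + 1) * f (γ t) * γ' t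
      = (2 * Real.pi) • (I * a n) :=
  quaternion_taylor_coefficient_formula_general I hI p₀ R a ha hsum f hf r hr hrR γ γ' hγ hγ' n
end

section
/- (Cauchy's theorem on an H-plane.) Let I ∈ ℍ be an imaginary unit and φ_I : ℂ → ℍ the unique ℝ-algebra homomorphism with φ_I(i) = I. Let U ⊆ ℂ be an open disc, f : ℂ → ℂ differentiable (holomorphic) on U, and ζ : [α,β] → U a continuously differentiable closed path (ζ(α) = ζ(β)). Then the quaternionic contour integral of the transferred function around the transferred closed path vanishes: ∫_0 := ∫_α^β φ_I(f(ζ(t))) * (φ_I ∘ ζ)'(t) dt = 0. -/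
/-!
A holomorphic function on a disc has a primitive `F` there (Morera), so along a closed `C¹` path
the complex contour integral is `F (ζ β) - F (ζ α) = 0`. The map `φ` is `ℝ`-linear and
multiplicative, hence it carries the complex integrand `ζ' t * f (ζ t)` to the quaternionic one
(the two factors commute in `ℂ`) and commutes with the integral, so the quaternionic integral
is `φ 0 = 0`.
-/

open scoped Quaternion Interval
open Set MeasureTheory

variable {E : Type*} [NormedAddCommGroup E] [NormedSpace ℂ E]

theorem intervalIntegrable_deriv_smul_comp {f : ℂ → E} {U : Set ℂ} (hf : ContinuousOn f U)
    {α β : ℝ} {ζ ζ' : ℝ → ℂ} (hmem : ∀ t ∈ [[α, β]], ζ t ∈ U)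
    (hζ : ∀ t ∈ [[α, β]], HasDerivAt ζ (ζ' t) t) (hζ' : ContinuousOn ζ' [[α, β]]) :
    IntervalIntegrable (fun t => ζ' t • f (ζ t)) volume α β := by
  have hζc : ContinuousOn ζ [[α, β]] := fun t ht => (hζ t ht).continuousAt.continuousWithinAt
  exact (hζ'.smul (hf.comp hζc hmem)).intervalIntegrable

theorem intervalIntegral_deriv_smul_comp_eq_sub [CompleteSpace E] {F f : ℂ → E} {U : Set ℂ}
    (hF : ∀ z ∈ U, HasDerivAt F (f z) z) {α β : ℝ} {ζ ζ' : ℝ → ℂ}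
    (hmem : ∀ t ∈ [[α, β]], ζ t ∈ U) (hζ : ∀ t ∈ [[α, β]], HasDerivAt ζ (ζ' t) t)
    (hint : IntervalIntegrable (fun t => ζ' t • f (ζ t)) volume α β) :
    ∫ t in α..β, ζ' t • f (ζ t) = F (ζ β) - F (ζ α) :=
  intervalIntegral.integral_eq_sub_of_hasDerivAt
    (fun t ht => (hF (ζ t) (hmem t ht)).scomp t (hζ t ht)) hint

theorem DifferentiableOn.intervalIntegral_deriv_smul_comp_eq_zero_of_ball [CompleteSpace E]
    {f : ℂ → E} {c : ℂ} {r : ℝ} (hf : DifferentiableOn ℂ f (Metric.ball c r))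
    {α β : ℝ} {ζ ζ' : ℝ → ℂ} (hmem : ∀ t ∈ [[α, β]], ζ t ∈ Metric.ball c r)
    (hζ : ∀ t ∈ [[α, β]], HasDerivAt ζ (ζ' t) t) (hζ' : ContinuousOn ζ' [[α, β]])
    (hclosed : ζ α = ζ β) :
    ∫ t in α..β, ζ' t • f (ζ t) = 0 := by
  obtain ⟨F, hF⟩ := hf.isExactOn_ball
  rw [intervalIntegral_deriv_smul_comp_eq_sub hF hmem hζ
    (intervalIntegrable_deriv_smul_comp hf.continuousOn hmem hζ hζ'), hclosed, sub_self]

theorem quaternion_cauchy_theorem_on_H_plane_general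
    (φ : ℂ →ₐ[ℝ] ℍ[ℝ])
    (z₀ : ℂ) (ρ : ℝ) (U : Set ℂ) (hU : U = Metric.ball z₀ ρ)
    (f : ℂ → ℂ) (hf : DifferentiableOn ℂ f U)
    (α β : ℝ) (hαβ : α ≤ β)
    (ζ ζ' : ℝ → ℂ)
    (hmem : ∀ t ∈ Set.Icc α β, ζ t ∈ U)
    (hζ : ∀ t ∈ Set.Icc α β, HasDerivAt ζ (ζ' t) t)
    (hζ' : ContinuousOn ζ' (Set.Icc α β))
    (hclosed : ζ α = ζ β) :
    ∫ t in α..β, φ (f (ζ t)) * φ (ζ' t) = 0 := by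
  subst hU
  rw [← uIcc_of_le hαβ] at hmem hζ hζ'
  have hint := intervalIntegrable_deriv_smul_comp hf.continuousOn hmem hζ hζ'
  calc ∫ t in α..β, φ (f (ζ t)) * φ (ζ' t)
      = ∫ t in α..β, φ.toLinearMap.toContinuousLinearMap (ζ' t • f (ζ t)) := by
        simp only [LinearMap.coe_toContinuousLinearMap', AlgHom.toLinearMap_apply, smul_eq_mul,
          map_mul, mul_comm]
    _ = φ (∫ t in α..β, ζ' t • f (ζ t)) :=
        φ.toLinearMap.toContinuousLinearMap.intervalIntegral_comp_comm hint
    _ = 0 := by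
        rw [hf.intervalIntegral_deriv_smul_comp_eq_zero_of_ball hmem hζ hζ' hclosed, map_zero]

theorem quaternion_cauchy_theorem_on_H_plane
    (I : ℍ[ℝ]) (hI : I * I = -1)
    (φ : ℂ →ₐ[ℝ] ℍ[ℝ]) (hφ : φ Complex.I = I)
    (z₀ : ℂ) (ρ : ℝ) (U : Set ℂ) (hU : U = Metric.ball z₀ ρ)
    (f : ℂ → ℂ) (hf : DifferentiableOn ℂ f U)
    (α β : ℝ) (hαβ : α ≤ β)
    (ζ ζ' : ℝ → ℂ)
    (hmem : ∀ t ∈ Set.Icc α β, ζ t ∈ U)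
    (hζ : ∀ t ∈ Set.Icc α β, HasDerivAt ζ (ζ' t) t)
    (hζ' : ContinuousOn ζ' (Set.Icc α β))
    (hclosed : ζ α = ζ β) :
    ∫ t in α..β, φ (f (ζ t)) * φ (ζ' t) = 0 :=
  quaternion_cauchy_theorem_on_H_plane_general φ z₀ ρ U hU f hf α β hαβ ζ ζ' hmem hζ hζ' hclosed
end

section
/- (Cauchy's integral formula for an H-circle.) Let I ∈ ℍ be an imaginary unit and φ_I : ℂ → ℍ the unique ℝ-algebra homomorphism with φ_I(i) = I. Let z₀ ∈ ℂ, r > 0, and let f : ℂ → ℂ be differentiable (holomorphic) on an open set containing the closed disc {z : |z − z₀| ≤ r}. Set ζ(t) = z₀ + r·e^{it} and γ = φ_I ∘ ζ for t ∈ [0, 2π]. Then for every w ∈ ℂ with |w − z₀| < r: ∫_0^{2π} (γ(t) − φ_I(w))⁻¹ * φ_I(f(ζ(t))) * γ'(t) dt = 2π·I·φ_I(f(w)). -/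
/-! The integrand is the image under `φ` of the classical Cauchy integrand
`(ζ - w)⁻¹ f(ζ) ζ'`, because `φ` is a ring homomorphism into a division ring. Being
`ℝ`-linear on the finite-dimensional space `ℂ`, `φ` also commutes with the integral, so the
formula is `φ` applied to Cauchy's integral formula on the circle. -/

open scoped Quaternion
open Metric MeasureTheory Real

theorem LinearMap.intervalIntegral_comp_comm {E F : Type*} [NormedAddCommGroup E]
    [NormedSpace ℝ E] [FiniteDimensional ℝ E] [NormedAddCommGroup F] [NormedSpace ℝ F]
    [CompleteSpace F] (L : E →ₗ[ℝ] F) {g : ℝ → E} {a b : ℝ}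
    (hg : IntervalIntegrable g volume a b) :
    ∫ t in a..b, L (g t) = L (∫ t in a..b, g t) :=
  haveI : CompleteSpace E := FiniteDimensional.complete ℝ E
  L.toContinuousLinearMap.intervalIntegral_comp_comm hg

theorem ContinuousOn.circleIntegrable_sub_inv_smul {E : Type*} [NormedAddCommGroup E]
    [NormedSpace ℂ E] {f : ℂ → E} {c w : ℂ} {R : ℝ} (hf : ContinuousOn f (closedBall c R))
    (hw : w ∈ ball c R) : CircleIntegrable (fun z => (z - w)⁻¹ • f z) c R := by
  have hR : 0 ≤ R := dist_nonneg.trans (mem_ball.mp hw).le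
  have hw_ne : ∀ z ∈ sphere c R, z - w ≠ 0 := fun z hz =>
    sub_ne_zero.mpr (ne_of_mem_of_not_mem hz fun h => (mem_sphere.mp h).not_lt (mem_ball.mp hw))
  exact ContinuousOn.circleIntegrable hR
    (((continuousOn_id.sub continuousOn_const).inv₀ hw_ne).smul
      (hf.mono sphere_subset_closedBall))

theorem quaternion_cauchy_integral_formula_H_circle_general
    (I : ℍ[ℝ])
    (φ : ℂ →ₐ[ℝ] ℍ[ℝ]) (hφ : φ Complex.I = I)
    (z₀ : ℂ) (r : ℝ)
    (U : Set ℂ) (hU : Metric.closedBall z₀ r ⊆ U)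
    (f : ℂ → ℂ) (hf : DifferentiableOn ℂ f U)
    (ζ : ℝ → ℂ) (hζ : ∀ t, ζ t = z₀ + r * Complex.exp (t * Complex.I))
    (γ γ' : ℝ → ℍ[ℝ])
    (hγ : ∀ t, γ t = φ (ζ t))
    (hγ' : ∀ t, γ' t = φ (r * Complex.I * Complex.exp (t * Complex.I)))
    (w : ℂ) (hw : ‖w - z₀‖ < r) :
    ∫ t in (0:ℝ)..(2 * Real.pi), (γ t - φ w)⁻¹ * φ (f (ζ t)) * γ' t
      = (2 * Real.pi) • (I * φ (f w)) := by
  have hζ_circle : ζ = circleMap z₀ r := funext hζ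
  have hw_ball : w ∈ ball z₀ r := mem_ball_iff_norm.mpr hw
  have hd : DifferentiableOn ℂ f (closedBall z₀ r) := hf.mono hU
  have integrand_eq : ∀ t, (γ t - φ w)⁻¹ * φ (f (ζ t)) * γ' t
      = φ (deriv (circleMap z₀ r) t • ((circleMap z₀ r t - w)⁻¹ • f (circleMap z₀ r t))) := by
    intro t
    rw [hγ, hγ', hζ_circle, deriv_circleMap, ← map_sub, ← map_inv₀, ← map_mul, ← map_mul]
    congr 1
    simp only [circleMap, smul_eq_mul, zero_add]
    ring
  have cauchy : ∫ t in (0:ℝ)..(2 * π),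
        deriv (circleMap z₀ r) t • ((circleMap z₀ r t - w)⁻¹ • f (circleMap z₀ r t))
      = (2 * π : ℝ) • (Complex.I * f w) := by
    rw [Complex.real_smul, ← mul_assoc]
    exact_mod_cast hd.circleIntegral_sub_inv_smul hw_ball
  rw [intervalIntegral.integral_congr fun t _ => integrand_eq t]
  refine (φ.toLinearMap.intervalIntegral_comp_comm
    (hd.continuousOn.circleIntegrable_sub_inv_smul hw_ball).out).trans ?_
  rw [AlgHom.toLinearMap_apply, cauchy, map_smul, map_mul, hφ]

theorem quaternion_cauchy_integral_formula_H_circle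
    (I : ℍ[ℝ]) (hI : I * I = -1)
    (φ : ℂ →ₐ[ℝ] ℍ[ℝ]) (hφ : φ Complex.I = I)
    (z₀ : ℂ) (r : ℝ) (hr : 0 < r)
    (U : Set ℂ) (hUopen : IsOpen U) (hU : Metric.closedBall z₀ r ⊆ U)
    (f : ℂ → ℂ) (hf : DifferentiableOn ℂ f U)
    (ζ : ℝ → ℂ) (hζ : ∀ t, ζ t = z₀ + r * Complex.exp (t * Complex.I))
    (γ γ' : ℝ → ℍ[ℝ])
    (hγ : ∀ t, γ t = φ (ζ t))
    (hγ' : ∀ t, γ' t = φ (r * Complex.I * Complex.exp (t * Complex.I)))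
    (w : ℂ) (hw : ‖w - z₀‖ < r) :
    ∫ t in (0:ℝ)..(2 * Real.pi), (γ t - φ w)⁻¹ * φ (f (ζ t)) * γ' t
      = (2 * Real.pi) • (I * φ (f w)) :=
  quaternion_cauchy_integral_formula_H_circle_general I φ hφ z₀ r U hU f hf ζ hζ γ γ' hγ hγ' w hw
end
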